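/- Let m be a positive integer and let f : ℂ^m → ℂ be an entire function (analytic on all of ℂ^m). Then f is algebraic over ℂ(z₁,…,z_m), i.e., there exists a nonzero polynomial P ∈ ℂ[z₁,…,z_m,w] with P(z₁,…,z_m,f(z₁,…,z_m)) = 0 for all (z₁,…,z_m) ∈ ℂ^m, if and only if f is a polynomial function, i.e., there exists Q ∈ ℂ[z₁,…,z_m] with f(z) = Q(z) for all z ∈ ℂ^m. -/

import Mathlib

/-!
Restrict `f` to the complex line `t ↦ t • z`. For most directions `z`, `P (t • z, w)` is a
nonzero polynomial in `w` whose coefficients are polynomials in `t` of degree at most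
`d = deg P`, so Cauchy's bound on roots gives `f (t • z) = O(tᵈ)`. Cauchy's estimates then kill
every Taylor coefficient of `t ↦ f (t • z)` beyond degree `d`, and these coefficients are
`iteratedFDeriv ℂ n f 0` on the diagonal `(z, …, z)`, which are polynomials in `z`. Hence `f`
agrees with a polynomial on a nonempty open set, and everywhere by the identity theorem.
-/

open Polynomial Filter Asymptotics Bornology Finset Nat

namespace Polynomial

theorem isBigO_cobounded_pow_of_isRoot {𝕜 : Type*} [NormedField 𝕜] {R : 𝕜[X][X]}
    (hR : R ≠ 0) {d : ℕ} (hd : ∀ j, (R.coeff j).natDegree ≤ d) {g : 𝕜 → 𝕜}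
    (hg : ∀ t, (R.map (evalRingHom t)).IsRoot (g t)) :
    g =O[cobounded 𝕜] (· ^ d) := by
  have hcoeff : ∀ j, (R.coeff j).eval =O[cobounded 𝕜] (· ^ d) := fun j => by
    simpa using isBigO_cobounded_of_degree_le (P := R.coeff j) (Q := X ^ d)
      (by simpa using degree_le_of_natDegree_le (hd j))
  -- `1 = O(a)` for the leading coefficient `a` of `R`: far out, `a(t)` stays away from `0`.
  obtain ⟨c, hc⟩ := (isBigO_cobounded_of_degree_le (P := C 1) (Q := R.leadingCoeff)
      (by simpa using zero_le_degree_iff.mpr (leadingCoeff_ne_zero.mpr hR))).bound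
  have hbound : ∀ᶠ t in cobounded 𝕜,
      ‖g t‖ ≤ ‖c * ∑ j ∈ range R.natDegree, ‖(R.coeff j).eval t‖ + 1‖ := by
    filter_upwards [hc] with t ht
    rw [eval_C, norm_one] at ht
    have ha : evalRingHom t R.leadingCoeff ≠ 0 := fun h => by
      rw [coe_evalRingHom] at h
      norm_num [h] at ht
    have hroot := (hg t).norm_lt_cauchyBound (leadingCoeff_ne_zero.mp <| by
      rwa [leadingCoeff_map_of_leadingCoeff_ne_zero _ ha])
    rw [cauchyBound, natDegree_map_of_leadingCoeff_ne_zero _ ha,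
      leadingCoeff_map_of_leadingCoeff_ne_zero _ ha] at hroot
    have hsup : (range R.natDegree).sup (‖(R.map (evalRingHom t)).coeff ·‖₊)
        ≤ ∑ j ∈ range R.natDegree, ‖(R.coeff j).eval t‖₊ :=
      Finset.sup_le fun j hj => by
        simpa using single_le_sum (f := fun j => ‖(R.coeff j).eval t‖₊) (by simp) hj
    replace hroot : ‖g t‖₊ ≤ (∑ j ∈ range R.natDegree, ‖(R.coeff j).eval t‖₊)
        / ‖R.leadingCoeff.eval t‖₊ + 1 :=
      hroot.le.trans (by simp only [coe_evalRingHom] at hsup ⊢; gcongr)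
    have hinv : ‖R.leadingCoeff.eval t‖⁻¹ ≤ c := by
      rwa [inv_le_iff_one_le_mul₀ (by simpa using ha)]
    calc ‖g t‖
        ≤ (∑ j ∈ range R.natDegree, ‖(R.coeff j).eval t‖) / ‖R.leadingCoeff.eval t‖
          + 1 := by simpa using NNReal.coe_le_coe.mpr hroot
      _ ≤ c * ∑ j ∈ range R.natDegree, ‖(R.coeff j).eval t‖ + 1 := by
          rw [div_eq_mul_inv, mul_comm]
          gcongr
      _ ≤ _ := Real.le_norm_self _
  refine (IsBigO.of_bound' hbound).trans ?_
  exact ((IsBigO.fun_sum fun j _ => (hcoeff j).norm_left).const_mul_left c).add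
    (by simpa using (isBigO_pow_pow_cobounded_of_le (R := 𝕜) (Nat.zero_le d)).norm_left)

end Polynomial

namespace Differentiable

variable {E : Type*} [NormedAddCommGroup E] [NormedSpace ℂ E] [CompleteSpace E]
  {g : ℂ → E} {d : ℕ}

theorem iteratedDeriv_eq_zero_of_isBigO_pow (hg : Differentiable ℂ g)
    (hgd : g =O[cobounded ℂ] (· ^ d)) {n : ℕ} (hdn : d < n) : iteratedDeriv n g 0 = 0 := by
  obtain ⟨C, hC0, hC⟩ := hgd.exists_pos
  obtain ⟨r, hr⟩ := hasBasis_cobounded_norm.eventually_iff.mp hC.bound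
  have hle : ∀ᶠ R in atTop, ‖iteratedDeriv n g 0‖ ≤ n ! * C / R := by
    filter_upwards [eventually_ge_atTop r, eventually_ge_atTop 1] with R hrR hR
    have hR0 : 0 < R := one_pos.trans_le hR
    refine (Complex.norm_iteratedDeriv_le_of_forall_mem_sphere_norm_le n hR0
      hg.diffContOnCl (C := C * R ^ d) fun t ht => ?_).trans ?_
    · have htR := mem_sphere_zero_iff_norm.mp ht
      simpa [htR] using hr.2 (htR ▸ hrR : r ≤ ‖t‖)
    · rw [div_le_div_iff₀ (by positivity) hR0]
      calc n ! * (C * R ^ d) * R = n ! * C * R ^ (d + 1) := by ring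
        _ ≤ n ! * C * R ^ n := by gcongr; exact hdn
  exact norm_le_zero_iff.mp <| ge_of_tendsto (tendsto_const_nhds.div_atTop tendsto_id) hle

theorem eq_sum_range_of_isBigO_pow (hg : Differentiable ℂ g)
    (hgd : g =O[cobounded ℂ] (· ^ d)) (t : ℂ) :
    g t = ∑ n ∈ range (d + 1), (n ! : ℂ)⁻¹ • t ^ n • iteratedDeriv n g 0 := by
  refine ((Complex.hasSum_taylorSeries_of_entire hg 0 t).unique
    (hasSum_sum_of_ne_finset_zero (s := range (d + 1)) fun n hn => ?_)).trans (by simp)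
  rw [hg.iteratedDeriv_eq_zero_of_isBigO_pow hgd (by simpa using hn), smul_zero, smul_zero]

end Differentiable

theorem iteratedDeriv_comp_smul_right {𝕜 E F : Type*} [NontriviallyNormedField 𝕜]
    [NormedAddCommGroup E] [NormedSpace 𝕜 E] [NormedAddCommGroup F] [NormedSpace 𝕜 F]
    {f : E → F} {n : ℕ} (hf : ContDiff 𝕜 n f) (z : E) (t : 𝕜) :
    iteratedDeriv n (fun s : 𝕜 => f (s • z)) t =
      iteratedFDeriv 𝕜 n f (t • z) (fun _ => z) := by
  rw [iteratedDeriv_eq_iteratedFDeriv]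
  have := (ContinuousLinearMap.toSpanSingleton 𝕜 z).iteratedFDeriv_comp_right hf t le_rfl
  simpa [Function.comp_def] using congrArg (· fun _ => (1 : 𝕜)) this

theorem MultilinearMap.exists_mvPolynomial_eval_eq {R ι σ : Type*} [CommSemiring R]
    [Fintype ι] [Fintype σ] (M : MultilinearMap R (fun _ : ι => σ → R) R) :
    ∃ Q : MvPolynomial σ R, ∀ z, MvPolynomial.eval z Q = M (fun _ => z) := by
  classical
  refine ⟨∑ j : ι → σ, MvPolynomial.C (M fun i => Pi.single (j i) 1) *
    ∏ i, MvPolynomial.X (j i), fun z => ?_⟩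
  conv_rhs => rw [pi_eq_sum_univ' z, M.map_sum]
  simp [M.map_smul_univ, mul_comm]

theorem AnalyticOnNhd.exists_mvPolynomial_of_forall_isBigO_line {σ : Type*} [Fintype σ]
    {f : (σ → ℂ) → ℂ} (hf : AnalyticOnNhd ℂ f Set.univ) {U : Set (σ → ℂ)}
    (hU : IsOpen U) (hUne : U.Nonempty) {d : ℕ}
    (hfU : ∀ z ∈ U, (fun t : ℂ => f (t • z)) =O[cobounded ℂ] (· ^ d)) :
    ∃ Q : MvPolynomial σ ℂ, ∀ z, f z = MvPolynomial.eval z Q := by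
  choose Q hQ using fun n =>
    (iteratedFDeriv ℂ n f 0).toMultilinearMap.exists_mvPolynomial_eval_eq
  set T := ∑ n ∈ range (d + 1), MvPolynomial.C (n ! : ℂ)⁻¹ * Q n
  have hfT : ∀ z ∈ U, f z = MvPolynomial.eval z T := fun z hz => by
    have hline : Differentiable ℂ fun t : ℂ => f (t • z) :=
      (hf.contDiff (n := 1)).differentiable one_ne_zero |>.comp (differentiable_id.smul_const z)
    rw [← one_smul ℂ z, hline.eq_sum_range_of_isBigO_pow (hfU z hz)]
    simp [T, iteratedDeriv_comp_smul_right hf.contDiff, hQ]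
  obtain ⟨z₀, hz₀⟩ := hUne
  have hT : AnalyticOnNhd ℂ (fun z => MvPolynomial.eval z T) Set.univ := by
    simpa using AnalyticOnNhd.eval_continuousLinearMap (.id ℂ (σ → ℂ)) T
  have hev : f =ᶠ[nhds z₀] fun z => MvPolynomial.eval z T :=
    eventually_of_mem (hU.mem_nhds hz₀) hfT
  exact ⟨T, congrFun <| hf.eq_of_eventuallyEq hT hev⟩

namespace MvPolynomial

variable {R : Type*} [CommSemiring R] {m : ℕ}

/-- `P (t • z, w)`, as a polynomial in `w` over `R[t]`. -/
noncomputable def lineRestriction (z : Fin m → R) :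
    MvPolynomial (Fin (m + 1)) R →ₐ[R] R[X][X] :=
  aeval (Fin.snoc (fun j => Polynomial.C (Polynomial.C (z j) * Polynomial.X)) Polynomial.X)

theorem eval_map_lineRestriction (z : Fin m → R) (P : MvPolynomial (Fin (m + 1)) R) (t w : R) :
    ((lineRestriction z P).map (evalRingHom t)).eval w = eval (Fin.snoc (t • z) w) P := by
  induction P using MvPolynomial.induction_on with
  | C a => simp [lineRestriction]
  | add p q hp hq => simp [hp, hq]
  | mul_X p i hp =>
    rw [map_mul, Polynomial.map_mul, Polynomial.eval_mul, hp, map_mul, eval_X]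
    congr 1
    induction i using Fin.lastCases <;> simp [lineRestriction, mul_comm t]

theorem lineRestriction_monomial (z : Fin m → R) (s : Fin (m + 1) →₀ ℕ) (a : R) :
    lineRestriction z (monomial s a) =
      Polynomial.C (Polynomial.C (a * ∏ j, z j ^ s j.castSucc) *
        Polynomial.X ^ ∑ j : Fin m, s j.castSucc) * Polynomial.X ^ s (Fin.last m) := by
  simp [lineRestriction, aeval_monomial, Finsupp.prod_fintype, Fin.prod_univ_castSucc, mul_pow,
    prod_mul_distrib, prod_pow_eq_pow_sum]
  ring

theorem natDegree_coeff_lineRestriction_le (z : Fin m → R) (P : MvPolynomial (Fin (m + 1)) R)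
    (k : ℕ) : ((lineRestriction z P).coeff k).natDegree ≤ P.totalDegree := by
  conv_lhs => rw [P.as_sum, map_sum, finsetSum_coeff]
  refine natDegree_sum_le_of_forall_le _ _ fun s hs => ?_
  rw [lineRestriction_monomial, coeff_C_mul_X_pow]
  split_ifs
  · refine (natDegree_C_mul_X_pow_le _ _).trans ((le_totalDegree hs).trans' ?_)
    rw [Finsupp.sum_fintype _ _ fun _ => rfl, Fin.sum_univ_castSucc]
    exact Nat.le_add_right _ _
  · simp

end MvPolynomial

theorem entire_algebraic_iff_polynomial_general
    (m : ℕ) (f : (Fin m → ℂ) → ℂ) (hf : ∀ x, AnalyticAt ℂ f x) :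
    (∃ P : MvPolynomial (Fin (m + 1)) ℂ, P ≠ 0 ∧
        ∀ z : Fin m → ℂ, MvPolynomial.eval (Fin.snoc z (f z)) P = 0)
      ↔ (∃ Q : MvPolynomial (Fin m) ℂ, ∀ z : Fin m → ℂ, f z = MvPolynomial.eval z Q) := by
  constructor
  · rintro ⟨P, hP0, hPf⟩
    obtain ⟨x, hx⟩ : ∃ x, MvPolynomial.eval x P ≠ 0 := by
      by_contra! h
      exact hP0 (MvPolynomial.funext fun x => by simpa using h x)
    set w := x (Fin.last m)
    have hU : IsOpen {z | MvPolynomial.eval (Fin.snoc z w) P ≠ 0} :=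
      isOpen_ne_fun ((MvPolynomial.continuous_eval P).comp
        (continuous_id.finSnoc (A := fun _ => ℂ) continuous_const)) continuous_const
    refine AnalyticOnNhd.exists_mvPolynomial_of_forall_isBigO_line (fun x _ => hf x) hU
      (d := P.totalDegree) ⟨Fin.init x, by simpa [w]⟩ fun z hz => ?_
    refine isBigO_cobounded_pow_of_isRoot (R := MvPolynomial.lineRestriction z P) (fun h => hz ?_)
      (MvPolynomial.natDegree_coeff_lineRestriction_le z P) fun t => ?_
    · simpa [h] using (MvPolynomial.eval_map_lineRestriction z P 1 w).symm
    · simpa [IsRoot, MvPolynomial.eval_map_lineRestriction] using hPf (t • z)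
  · rintro ⟨Q, hQ⟩
    have hval : ∀ z w, MvPolynomial.eval (Fin.snoc z w)
        (.X (Fin.last m) - MvPolynomial.rename Fin.castSucc Q) = w - MvPolynomial.eval z Q := by
      intro z w
      simp [MvPolynomial.eval_rename, Function.comp_def]
    refine ⟨.X (Fin.last m) - MvPolynomial.rename Fin.castSucc Q, fun h => ?_,
      fun z => by rw [hval, hQ, sub_self]⟩
    simpa [h] using hval 0 (MvPolynomial.eval 0 Q + 1)

/-- an entire function `f : ℂ^m → ℂ` is algebraic over `ℂ(z₁,…,z_m)`
if and only if it is a polynomial function. -/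
theorem entire_algebraic_iff_polynomial
    (m : ℕ) (hm : 0 < m) (f : (Fin m → ℂ) → ℂ) (hf : ∀ x, AnalyticAt ℂ f x) :
    (∃ P : MvPolynomial (Fin (m + 1)) ℂ, P ≠ 0 ∧
        ∀ z : Fin m → ℂ, MvPolynomial.eval (Fin.snoc z (f z)) P = 0)
      ↔ (∃ Q : MvPolynomial (Fin m) ℂ, ∀ z : Fin m → ℂ, f z = MvPolynomial.eval z Q) :=
  entire_algebraic_iff_polynomial_general m f hf
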